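/- arXiv:1703.08480 — 4 statements merged into one kernel-verified Lean document; each statement's English description precedes it below -/
import Mathlib

section
/- For the LTI system y = G_u u + G_d d + G_f f (with w ≡ 0), the j-th fault f_j is detectable (i.e., there exists a fault detection filter Q with Q·[G_u; I]=0, Q·[G_d;0]=0, and Q·[G_{f_j};0] ≠ 0) if and only if rank [G_d(λ) G_{f_j}(λ)] > rank G_d(λ), where rank denotes normal rank over the field of rational functions. -/
/-!
Write a filter as `Q = [Q_y Q_u]`. Decoupling from `u` forces `Q_u = -Q_y G_u`, so what is needed
is a rational block `Q_y` with `Q_y G_d = 0` and `Q_y G_{f_j} ≠ 0`. Properness and stability cost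
nothing: multiplying by `d(λ) / (λ + 1)^M`, with `d` a common denominator and `M` large, makes any
finite family of rational functions proper with its only pole at `-1`. Such a `Q_y` exists iff
`G_{f_j}` lies outside the column space of `G_d` (a linear form vanishing on that space but not on
`G_{f_j}` gives a row), which is exactly the condition that appending `G_{f_j}` raises the rank.
-/

open Matrix Polynomial

noncomputable section

/-- A real rational function is proper: the degree of its numerator does not exceed
the degree of its denominator. -/
def RatFunc.IsProperR (f : RatFunc ℝ) : Prop :=
  f.num.natDegree ≤ f.denom.natDegree

/-- A real rational function is stable (continuous time): every complex pole
(root of the denominator) has negative real part. -/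
def RatFunc.IsStableR (f : RatFunc ℝ) : Prop :=
  ∀ z : ℂ, (f.denom.map (algebraMap ℝ ℂ)).IsRoot z → z.re < 0

/-- A rational matrix is proper if all its entries are proper. -/
def Matrix.IsProperR {m n : Type*} (G : Matrix m n (RatFunc ℝ)) : Prop :=
  ∀ i j, (G i j).IsProperR

/-- A rational matrix is stable if all its entries are stable. -/
def Matrix.IsStableR {m n : Type*} (G : Matrix m n (RatFunc ℝ)) : Prop :=
  ∀ i j, (G i j).IsStableR

/-- The `j`-th column of a rational matrix, as a one-column matrix. -/
def colMat {p mf : ℕ} (G : Matrix (Fin p) (Fin mf) (RatFunc ℝ)) (j : Fin mf) :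
    Matrix (Fin p) (Fin 1) (RatFunc ℝ) :=
  Matrix.of fun i _ => G i j

section LinearAlgebra

variable {m n o : Type*} [Fintype n] [Fintype o]

theorem Matrix.range_mulVecLin_fromCols {R : Type*} [CommSemiring R]
    (A : Matrix m n R) (B : Matrix m o R) :
    LinearMap.range (fromCols A B).mulVecLin =
      LinearMap.range A.mulVecLin ⊔ LinearMap.range B.mulVecLin := by
  apply le_antisymm
  · rintro _ ⟨v, rfl⟩
    rw [mulVecLin_apply, fromCols_mulVec]
    exact Submodule.add_mem_sup ⟨_, rfl⟩ ⟨_, rfl⟩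
  · refine sup_le ?_ ?_
    · rintro _ ⟨v, rfl⟩
      exact ⟨Sum.elim v 0, by simp⟩
    · rintro _ ⟨v, rfl⟩
      exact ⟨Sum.elim 0 v, by simp⟩

theorem Matrix.mul_eq_zero_iff_range_le_ker {l R : Type*} [CommSemiring R] [Fintype m]
    (N : Matrix l m R) (A : Matrix m n R) :
    N * A = 0 ↔ LinearMap.range A.mulVecLin ≤ LinearMap.ker N.mulVecLin := by
  classical
  rw [LinearMap.range_le_ker_iff, ← mulVecLin_mul, ← toLin'_apply', LinearEquiv.map_eq_zero_iff]

variable {K : Type*} [Field K]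

theorem Matrix.rank_lt_rank_fromCols_iff (A : Matrix m n K) (B : Matrix m o K) :
    A.rank < (fromCols A B).rank ↔
      ¬LinearMap.range B.mulVecLin ≤ LinearMap.range A.mulVecLin := by
  rw [rank, rank, range_mulVecLin_fromCols, ← left_lt_sup]
  refine ⟨fun h => lt_of_le_of_ne le_sup_left fun he => h.ne (by rw [← he]),
    Submodule.finrank_lt_finrank_of_lt⟩

theorem Matrix.exists_mul_eq_zero_mul_ne_zero_iff [Fintype m] (A : Matrix m n K)
    (B : Matrix m o K) :
    (∃ (q : ℕ) (N : Matrix (Fin q) m K), N * A = 0 ∧ N * B ≠ 0) ↔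
      ¬LinearMap.range B.mulVecLin ≤ LinearMap.range A.mulVecLin := by
  classical
  simp only [ne_eq, mul_eq_zero_iff_range_le_ker]
  constructor
  · rintro ⟨q, N, hA, hB⟩ hle
    exact hB (hle.trans hA)
  · intro h
    obtain ⟨x, hxB, hxA⟩ := SetLike.not_le_iff_exists.mp h
    obtain ⟨f, hfx, hfA⟩ := Submodule.exists_dual_map_eq_bot_of_notMem hxA inferInstance
    rw [← LinearMap.le_ker_iff_map] at hfA
    refine ⟨1, LinearMap.toMatrix' (f.smulRight (1 : Fin 1 → K)), ?_, ?_⟩ <;>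
      rw [← toLin'_apply' (LinearMap.toMatrix' _), toLin'_toMatrix']
    · intro y hy
      simpa using hfA hy
    · exact fun hle => hfx (by simpa using congrFun (hle hxB) 0)

end LinearAlgebra

theorem Polynomial.re_lt_zero_of_isRoot_map_X_add_one_pow {M : ℕ} {z : ℂ}
    (hz : (((X + C 1) ^ M : ℝ[X]).map (algebraMap ℝ ℂ)).IsRoot z) : z.re < 0 := by
  simp only [Polynomial.map_pow, Polynomial.map_add, map_X, IsRoot.def, eval_pow, eval_add,
    eval_X, map_one] at hz
  rw [eq_neg_of_add_eq_zero_left (pow_eq_zero_iff'.mp hz).1]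
  norm_num

namespace RatFunc

theorem isProperR_iff_intDegree_nonpos (f : RatFunc ℝ) : f.IsProperR ↔ f.intDegree ≤ 0 := by
  rw [IsProperR, intDegree, sub_nonpos, Int.ofNat_le]

theorem isProperR_div_X_add_one_pow {P : ℝ[X]} {M : ℕ} (hP : P.natDegree ≤ M) :
    (algebraMap ℝ[X] (RatFunc ℝ) P /
      algebraMap ℝ[X] (RatFunc ℝ) ((Polynomial.X + Polynomial.C 1) ^ M)).IsProperR := by
  rw [isProperR_iff_intDegree_nonpos]
  rcases eq_or_ne P 0 with rfl | hP0
  · simp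
  have hXM : ((Polynomial.X + Polynomial.C 1) ^ M : ℝ[X]) ≠ 0 :=
    pow_ne_zero _ (X_add_C_ne_zero 1)
  rw [intDegree_div (algebraMap_ne_zero hP0) (algebraMap_ne_zero hXM), intDegree_polynomial,
    intDegree_polynomial, natDegree_pow, natDegree_X_add_C, mul_one]
  omega

theorem isStableR_div {P D : ℝ[X]}
    (hD : ∀ z : ℂ, (D.map (algebraMap ℝ ℂ)).IsRoot z → z.re < 0) :
    (algebraMap ℝ[X] (RatFunc ℝ) P / algebraMap ℝ[X] (RatFunc ℝ) D).IsStableR :=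
  fun z hz => hD z (hz.dvd (Polynomial.map_dvd _ (denom_div_dvd P D)))

theorem exists_ne_zero_forall_isProperR_isStableR_mul {ι : Type*} [Fintype ι]
    (F : ι → RatFunc ℝ) :
    ∃ s : RatFunc ℝ, s ≠ 0 ∧ ∀ i, (s * F i).IsProperR ∧ (s * F i).IsStableR := by
  obtain ⟨d, hd⟩ := IsLocalization.exist_integer_multiples_of_finite (nonZeroDivisors ℝ[X]) F
  choose P hP using hd
  set M := Finset.univ.sup fun i => (P i).natDegree
  have hXM : ((Polynomial.X + Polynomial.C 1) ^ M : ℝ[X]) ≠ 0 :=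
    pow_ne_zero _ (X_add_C_ne_zero 1)
  refine ⟨algebraMap ℝ[X] _ d / algebraMap ℝ[X] _ ((Polynomial.X + Polynomial.C 1) ^ M),
    div_ne_zero (algebraMap_ne_zero (nonZeroDivisors.coe_ne_zero d)) (algebraMap_ne_zero hXM),
    fun i => ?_⟩
  rw [div_mul_eq_mul_div, ← Algebra.smul_def, ← hP i]
  exact ⟨isProperR_div_X_add_one_pow (Finset.le_sup (f := fun i => (P i).natDegree)
    (Finset.mem_univ i)), isStableR_div fun _ => re_lt_zero_of_isRoot_map_X_add_one_pow⟩

end RatFunc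

theorem Matrix.exists_ne_zero_isProperR_isStableR_smul {m n : Type*} [Fintype m] [Fintype n]
    (N : Matrix m n (RatFunc ℝ)) :
    ∃ s : RatFunc ℝ, s ≠ 0 ∧ (s • N).IsProperR ∧ (s • N).IsStableR := by
  obtain ⟨s, hs0, hs⟩ :=
    RatFunc.exists_ne_zero_forall_isProperR_isStableR_mul fun ij : m × n => N ij.1 ij.2
  exact ⟨s, hs0, fun i j => (hs (i, j)).1, fun i j => (hs (i, j)).2⟩

theorem Matrix.toCols₁_smul {l m n R S : Type*} [SMul S R] (s : S) (A : Matrix l (m ⊕ n) R) :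
    (s • A).toCols₁ = s • A.toCols₁ :=
  rfl

theorem Matrix.mul_fromRows_zero {l m n o R : Type*} [Semiring R] [Fintype m] [Fintype n]
    (Q : Matrix l (m ⊕ n) R) (A : Matrix m o R) :
    Q * fromRows A (0 : Matrix n o R) = Q.toCols₁ * A := by
  nth_rw 1 [← fromCols_toCols Q]
  rw [fromCols_mul_fromRows, Matrix.mul_zero, add_zero]

theorem exists_isProperR_isStableR_filter_iff {n μ δ φ : Type*} [Fintype n] [Fintype μ]
    [Fintype δ] [Fintype φ] [DecidableEq μ] (Gu : Matrix n μ (RatFunc ℝ))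
    (Gd : Matrix n δ (RatFunc ℝ)) (Gf : Matrix n φ (RatFunc ℝ)) :
    (∃ (q : ℕ) (Q : Matrix (Fin q) (n ⊕ μ) (RatFunc ℝ)),
        Q.IsProperR ∧ Q.IsStableR ∧ Q * fromRows Gu (1 : Matrix μ μ (RatFunc ℝ)) = 0 ∧
        Q * fromRows Gd (0 : Matrix μ δ (RatFunc ℝ)) = 0 ∧
        Q * fromRows Gf (0 : Matrix μ φ (RatFunc ℝ)) ≠ 0) ↔
      ∃ (q : ℕ) (N : Matrix (Fin q) n (RatFunc ℝ)), N * Gd = 0 ∧ N * Gf ≠ 0 := by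
  simp only [mul_fromRows_zero]
  constructor
  · rintro ⟨q, Q, -, -, -, hd, hf⟩
    exact ⟨q, Q.toCols₁, hd, hf⟩
  · rintro ⟨q, N, hd, hf⟩
    obtain ⟨s, hs0, hproper, hstable⟩ :=
      (fromCols N (-(N * Gu))).exists_ne_zero_isProperR_isStableR_smul
    refine ⟨q, s • fromCols N (-(N * Gu)), hproper, hstable, ?_, ?_, ?_⟩
    · rw [Matrix.smul_mul, fromCols_mul_fromRows, Matrix.mul_one, add_neg_cancel, smul_zero]
    · rw [toCols₁_smul, toCols₁_fromCols, Matrix.smul_mul, hd, smul_zero]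
    · rw [toCols₁_smul, toCols₁_fromCols, Matrix.smul_mul]
      exact smul_ne_zero hs0 hf

/-- **Fault detectability characterization** (Proposition: the `j`-th fault is
detectable iff `rank [G_d  G_{f_j}] > rank G_d`). -/
theorem fault_detectable_iff_rank
    (p mu md mf : ℕ)
    (Gu : Matrix (Fin p) (Fin mu) (RatFunc ℝ))
    (Gd : Matrix (Fin p) (Fin md) (RatFunc ℝ))
    (Gf : Matrix (Fin p) (Fin mf) (RatFunc ℝ)) (j : Fin mf) :
    (∃ (q : ℕ) (Q : Matrix (Fin q) (Fin p ⊕ Fin mu) (RatFunc ℝ)),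
        Q.IsProperR ∧ Q.IsStableR ∧
        Q * Matrix.fromRows Gu (1 : Matrix (Fin mu) (Fin mu) (RatFunc ℝ)) = 0 ∧
        Q * Matrix.fromRows Gd (0 : Matrix (Fin mu) (Fin md) (RatFunc ℝ)) = 0 ∧
        Q * Matrix.fromRows (colMat Gf j) (0 : Matrix (Fin mu) (Fin 1) (RatFunc ℝ)) ≠ 0) ↔
      Gd.rank < (Matrix.fromCols Gd (colMat Gf j)).rank := by
  rw [exists_isProperR_isStableR_filter_iff, exists_mul_eq_zero_mul_ne_zero_iff,
    rank_lt_rank_fromCols_iff]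

end
end

section
/- For the system y = G_u u + G_d d + G_f f + G_w w, the approximate fault detection problem (AFDP) is solvable if and only if the exact fault detection problem (EFDP, i.e., the problem with w ≡ 0) is solvable; equivalently, the AFDP is solvable if and only if the system is completely fault detectable. -/
/-!
Statement 7: For the system y = G_u u + G_d d + G_f f + G_w w, the approximate
fault detection problem (AFDP) is solvable if and only if the exact fault
detection problem (EFDP, the problem with w ≡ 0) is solvable; equivalently, the
AFDP is solvable if and only if the system is completely fault detectable.
-/

open Matrix Polynomial

noncomputable section

/-- The `H∞`-norm of a real rational matrix: the supremum over all frequencies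
`ω` of the (entrywise) magnitude of the frequency response `G(iω)`. -/
noncomputable def hinfNorm {m n : Type*} [Fintype m] [Fintype n]
    (G : Matrix m n (RatFunc ℝ)) : ℝ :=
  ⨆ ω : ℝ, ⨆ i : m, ⨆ j : n,
    ‖RatFunc.eval (algebraMap ℝ ℂ) (Complex.I * ω) (G i j)‖

/-- Solvability of the exact fault detection problem (EFDP): a proper stable
filter decoupling `u` and `d`, with stable fault channel `R_f` all of whose
columns are nonzero. -/
def EFDPSolvable {p mu md mf : ℕ}
    (Gu : Matrix (Fin p) (Fin mu) (RatFunc ℝ))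
    (Gd : Matrix (Fin p) (Fin md) (RatFunc ℝ))
    (Gf : Matrix (Fin p) (Fin mf) (RatFunc ℝ)) : Prop :=
  ∃ (q : ℕ) (Q : Matrix (Fin q) (Fin p ⊕ Fin mu) (RatFunc ℝ)),
    Q.IsProperR ∧ Q.IsStableR ∧
    Q * Matrix.fromRows Gu (1 : Matrix (Fin mu) (Fin mu) (RatFunc ℝ)) = 0 ∧
    Q * Matrix.fromRows Gd (0 : Matrix (Fin mu) (Fin md) (RatFunc ℝ)) = 0 ∧
    (Q * Matrix.fromRows Gf (0 : Matrix (Fin mu) (Fin mf) (RatFunc ℝ))).IsStableR ∧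
    ∀ j : Fin mf,
      Q * Matrix.fromRows (colMat Gf j) (0 : Matrix (Fin mu) (Fin 1) (RatFunc ℝ)) ≠ 0

/-- Solvability of the approximate fault detection problem (AFDP): for every
`ε > 0` there is a proper stable filter decoupling `u` and `d`, with stable fault
channel whose columns are all nonzero, and with stable noise channel `R_w` of
`H∞`-norm smaller than `ε` (i.e., `R_w ≈ 0` can be enforced). -/
def AFDPSolvable {p mu md mf mw : ℕ}
    (Gu : Matrix (Fin p) (Fin mu) (RatFunc ℝ))
    (Gd : Matrix (Fin p) (Fin md) (RatFunc ℝ))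
    (Gf : Matrix (Fin p) (Fin mf) (RatFunc ℝ))
    (Gw : Matrix (Fin p) (Fin mw) (RatFunc ℝ)) : Prop :=
  ∀ ε : ℝ, 0 < ε →
    ∃ (q : ℕ) (Q : Matrix (Fin q) (Fin p ⊕ Fin mu) (RatFunc ℝ)),
      Q.IsProperR ∧ Q.IsStableR ∧
      Q * Matrix.fromRows Gu (1 : Matrix (Fin mu) (Fin mu) (RatFunc ℝ)) = 0 ∧
      Q * Matrix.fromRows Gd (0 : Matrix (Fin mu) (Fin md) (RatFunc ℝ)) = 0 ∧
      (Q * Matrix.fromRows Gf (0 : Matrix (Fin mu) (Fin mf) (RatFunc ℝ))).IsStableR ∧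
      (∀ j : Fin mf,
        Q * Matrix.fromRows (colMat Gf j) (0 : Matrix (Fin mu) (Fin 1) (RatFunc ℝ)) ≠ 0) ∧
      (Q * Matrix.fromRows Gw (0 : Matrix (Fin mu) (Fin mw) (RatFunc ℝ))).IsStableR ∧
      hinfNorm (Q * Matrix.fromRows Gw (0 : Matrix (Fin mu) (Fin mw) (RatFunc ℝ))) < ε

/-!
A row `v` of a fault detection filter that decouples `d` but still sees the fault `f_j` is a
rational vector with `v G_d = 0` and `v G_{f_j} ≠ 0`; such a `v` exists iff `G_{f_j}` is not in
the column space of `G_d`, i.e. iff appending it raises the rank. Conversely, such rows `v_j`,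
stacked into `V`, give the rational filter `Q₀ = [V, -V G_u]`, which decouples `u` and `d` and
detects every fault but may be improper and unstable. Multiplying by `α = c D(s) / (s + 1)^N`,
where `D` clears all denominators and `N` exceeds all resulting numerator degrees, leaves only
poles at `-1` and makes every entry proper; since `|iω + 1| ≥ max (1, |ω|)`, the entries of
`α R_w` are bounded on the imaginary axis by `c` times a constant, so letting `c → 0` makes
`‖R_w‖_∞` arbitrarily small while `R_f` stays nonzero.
-/

namespace Matrix

theorem range_col_fromCols_replicateCol {α m n ι : Type*} [Nonempty ι] (A : Matrix m n α)
    (x : m → α) : Set.range (fromCols A (replicateCol ι x)).col = Set.range A.col ∪ {x} := by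
  rw [← Set.range_const (c := x) (ι := ι), ← Set.Sum.elim_range]
  congr 1
  ext (j | j) <;> rfl

-- Without the ascription on `0`, `*` elaborates to the `CStarMatrix` instance and the lemma
-- no longer rewrites products of `Matrix`.
theorem mul_fromRows_zero_s7 {R l m₁ m₂ n : Type*} [Semiring R] [Fintype m₁] [Fintype m₂]
    (Q : Matrix l (m₁ ⊕ m₂) R) (X : Matrix m₁ n R) :
    Q * fromRows X (0 : Matrix m₂ n R) = Q.toCols₁ * X := by
  rw [← fromCols_toCols Q, fromCols_mul_fromRows, Matrix.mul_zero, add_zero, toCols₁_fromCols]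

variable {F : Type*} [Field F] {m n : Type*} [Fintype m]

theorem rank_lt_rank_fromCols_replicateCol_iff_notMem [Fintype n] {ι : Type*} [Fintype ι]
    [Nonempty ι] (A : Matrix m n F) (x : m → F) :
    A.rank < (fromCols A (replicateCol ι x)).rank ↔ x ∉ Submodule.span F (Set.range A.col) := by
  rw [rank_eq_finrank_span_cols, rank_eq_finrank_span_cols, range_col_fromCols_replicateCol,
    Submodule.span_union]
  constructor
  · intro hlt hx
    rw [sup_eq_left.mpr ((Submodule.span_singleton_le_iff_mem _ _).mpr hx)] at hlt
    exact hlt.false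
  · intro hx
    exact Submodule.finrank_lt_finrank_of_lt <| SetLike.lt_iff_le_and_exists.mpr
      ⟨le_sup_left, x, Submodule.mem_sup_right (Submodule.mem_span_singleton_self x), hx⟩

theorem notMem_span_range_col_iff [DecidableEq m] (A : Matrix m n F) (x : m → F) :
    x ∉ Submodule.span F (Set.range A.col) ↔ ∃ v : m → F, v ᵥ* A = 0 ∧ v ⬝ᵥ x ≠ 0 := by
  rw [← Subspace.forall_mem_dualAnnihilator_apply_eq_zero_iff]
  push Not
  refine (dotProductEquiv F m).surjective.exists.trans
    (exists_congr fun v => and_congr ?_ Iff.rfl)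
  rw [Submodule.mem_dualAnnihilator]
  change Submodule.span F (Set.range A.col) ≤ LinearMap.ker (dotProductEquiv F m v) ↔ _
  rw [Submodule.span_le, Set.range_subset_iff, funext_iff]
  rfl

theorem rank_lt_rank_fromCols_replicateCol_iff [Fintype n] [DecidableEq m] {ι : Type*}
    [Fintype ι] [Nonempty ι] (A : Matrix m n F) (x : m → F) :
    A.rank < (fromCols A (replicateCol ι x)).rank ↔ ∃ v : m → F, v ᵥ* A = 0 ∧ v ⬝ᵥ x ≠ 0 :=
  (rank_lt_rank_fromCols_replicateCol_iff_notMem A x).trans (notMem_span_range_col_iff A x)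

theorem exists_vecMul_eq_zero_dotProduct_ne_zero_of_mul [Fintype n] {l ι : Type*}
    {P : Matrix l m F} {A : Matrix m n F} {x : m → F} (hA : P * A = 0)
    (hx : P * replicateCol ι x ≠ 0) : ∃ v : m → F, v ᵥ* A = 0 ∧ v ⬝ᵥ x ≠ 0 := by
  by_contra! h
  exact hx (ext fun i _ => h (P i) (congrFun hA i))

end Matrix

namespace RatFunc

theorem IsStableR.of_denom_dvd {f : RatFunc ℝ} {q : ℝ[X]} (hq : f.denom ∣ q)
    (hstab : ∀ z : ℂ, (q.map (algebraMap ℝ ℂ)).IsRoot z → z.re < 0) : f.IsStableR :=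
  fun z hz => hstab z (Polynomial.eval_eq_zero_of_dvd_of_eval_eq_zero
    (Polynomial.map_dvd _ hq) hz)

universe u

variable {K L : Type u} [Field K] [Field L]

theorem eval_algebraMap_div_algebraMap (f : K →+* L) {a : L} (p : K[X]) {q : K[X]}
    (hq : q.eval₂ f a ≠ 0) :
    eval f a (algebraMap _ _ p / algebraMap _ _ q) = p.eval₂ f a / q.eval₂ f a := by
  have hq0 : q ≠ 0 := by rintro rfl; simp at hq
  rw [eq_div_iff hq]
  have hden : (denom (algebraMap K[X] (RatFunc K) p / algebraMap _ _ q)).eval₂ f a ≠ 0 :=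
    fun h => hq (Polynomial.eval₂_eq_zero_of_dvd_of_eval₂_eq_zero f a (denom_div_dvd p q) h)
  have hqe : eval f a (algebraMap _ _ q) = q.eval₂ f a := by simp
  rw [← hqe, ← eval_mul f a hden (by simp), div_mul_cancel₀ _ (algebraMap_ne_zero hq0)]
  simp

end RatFunc

def divXAddOnePow (g : ℝ[X]) (N : ℕ) : RatFunc ℝ :=
  algebraMap ℝ[X] (RatFunc ℝ) g / algebraMap ℝ[X] (RatFunc ℝ) ((X + 1) ^ N)

theorem norm_eval₂_le_of_natDegree_le {g : ℝ[X]} {N : ℕ} (hg : g.natDegree ≤ N) {z : ℂ} {b : ℝ}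
    (hzb : ‖z‖ ≤ b) (hb : 1 ≤ b) :
    ‖g.eval₂ (algebraMap ℝ ℂ) z‖ ≤ (∑ k ∈ Finset.range (N + 1), |g.coeff k|) * b ^ N := by
  rw [eval₂_eq_sum_range' _ (Nat.lt_succ_of_le hg), Finset.sum_mul]
  refine (norm_sum_le _ _).trans (Finset.sum_le_sum fun k hk => ?_)
  rw [norm_mul, norm_pow, Complex.coe_algebraMap, Complex.norm_real, Real.norm_eq_abs]
  gcongr
  calc ‖z‖ ^ k ≤ b ^ k := by gcongr
    _ ≤ b ^ N := pow_le_pow_right₀ hb (Finset.mem_range_succ_iff.mp hk)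

theorem norm_eval_divXAddOnePow_le {g : ℝ[X]} {N : ℕ} (hg : g.natDegree ≤ N) (ω : ℝ) :
    ‖RatFunc.eval (algebraMap ℝ ℂ) (Complex.I * ω) (divXAddOnePow g N)‖ ≤
      ∑ k ∈ Finset.range (N + 1), |g.coeff k| := by
  set z : ℂ := Complex.I * ω
  have hre : (z + 1).re = 1 := by simp [z]
  have h1 : 1 ≤ ‖z + 1‖ := hre ▸ Complex.re_le_norm (z + 1)
  have hz : ‖z‖ ≤ ‖z + 1‖ := by
    simpa [z, Complex.norm_real] using Complex.abs_im_le_norm (z + 1)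
  have hpos : 0 < ‖z + 1‖ ^ N := by positivity
  rw [divXAddOnePow, RatFunc.eval_algebraMap_div_algebraMap _ _ (by simpa using hpos.ne'),
    norm_div, div_le_iff₀ (by simpa using hpos)]
  simpa using norm_eval₂_le_of_natDegree_le hg hz h1

theorem X_add_one_pow_ne_zero (N : ℕ) : ((X + 1) ^ N : ℝ[X]) ≠ 0 :=
  pow_ne_zero N (monic_X_add_C (1 : ℝ)).ne_zero

theorem isStableR_divXAddOnePow (g : ℝ[X]) (N : ℕ) : (divXAddOnePow g N).IsStableR := by
  refine RatFunc.IsStableR.of_denom_dvd (RatFunc.denom_div_dvd g _) fun z hz => ?_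
  have : z + 1 = 0 := (by simpa using hz : z + 1 = 0 ∧ _).1
  rw [eq_neg_of_add_eq_zero_left this]
  norm_num

theorem isProperR_divXAddOnePow {g : ℝ[X]} {N : ℕ} (hg : g.natDegree ≤ N) :
    (divXAddOnePow g N).IsProperR := by
  rcases eq_or_ne g 0 with rfl | hg0
  · simp [divXAddOnePow, RatFunc.IsProperR]
  rw [RatFunc.isProperR_iff_intDegree_nonpos, divXAddOnePow, RatFunc.intDegree_div
    (RatFunc.algebraMap_ne_zero hg0) (RatFunc.algebraMap_ne_zero (X_add_one_pow_ne_zero N)),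
    RatFunc.intDegree_polynomial, RatFunc.intDegree_polynomial, ← C_1,
    (monic_X_add_C 1).natDegree_pow, natDegree_X_add_C, mul_one]
  omega

theorem divXAddOnePow_mul {f : RatFunc ℝ} {r D : ℝ[X]} (hD : f.denom * r = D) (N : ℕ) :
    divXAddOnePow D N * f = divXAddOnePow (r * f.num) N := by
  have hf : algebraMap ℝ[X] (RatFunc ℝ) f.denom * f = algebraMap _ _ f.num := by
    rw [mul_comm, ← eq_div_iff (RatFunc.algebraMap_ne_zero f.denom_ne_zero), f.num_div_denom]
  have hpow := RatFunc.algebraMap_ne_zero (X_add_one_pow_ne_zero N)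
  rw [divXAddOnePow, divXAddOnePow, ← hD, map_mul, map_mul]
  field_simp
  linear_combination algebraMap ℝ[X] (RatFunc ℝ) r * hf

theorem RatFunc.exists_mul_isProperR_isStableR_norm_eval_le {ι : Type*} [Fintype ι]
    (E : ι → RatFunc ℝ) {ε : ℝ} (hε : 0 < ε) :
    ∃ α : RatFunc ℝ, α ≠ 0 ∧ ∀ i, (α * E i).IsProperR ∧ (α * E i).IsStableR ∧
      ∀ ω : ℝ, ‖RatFunc.eval (algebraMap ℝ ℂ) (Complex.I * ω) (α * E i)‖ ≤ ε := by
  classical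
  set D : ℝ[X] := ∏ i, (E i).denom
  have hD0 : D ≠ 0 := Finset.prod_ne_zero_iff.mpr fun i _ => (E i).denom_ne_zero
  choose r hr using fun i => Finset.dvd_prod_of_mem (fun i => (E i).denom) (Finset.mem_univ i)
  set g : ι → ℝ[X] := fun i => r i * (E i).num
  set N := Finset.univ.sup fun i => (g i).natDegree
  set S := ∑ i, ∑ k ∈ Finset.range (N + 1), |(g i).coeff k|
  have hS : 0 ≤ S := by positivity
  set c := ε / (S + 1)
  have hc : 0 < c := by positivity
  refine ⟨divXAddOnePow (Polynomial.C c * D) N, ?_, fun i => ?_⟩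
  · exact div_ne_zero
      (RatFunc.algebraMap_ne_zero (mul_ne_zero (Polynomial.C_ne_zero.mpr hc.ne') hD0))
      (RatFunc.algebraMap_ne_zero (X_add_one_pow_ne_zero N))
  have hαE : divXAddOnePow (Polynomial.C c * D) N * E i =
      divXAddOnePow (Polynomial.C c * g i) N := by
    rw [divXAddOnePow_mul (r := Polynomial.C c * r i) (by rw [show D = _ from hr i]; ring),
      mul_assoc]
  have hdeg : (Polynomial.C c * g i).natDegree ≤ N := natDegree_C_mul_le _ _ |>.trans
    (Finset.le_sup (f := fun i => (g i).natDegree) (Finset.mem_univ i))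
  rw [hαE]
  refine ⟨isProperR_divXAddOnePow hdeg, isStableR_divXAddOnePow _ _,
    fun ω => (norm_eval_divXAddOnePow_le hdeg ω).trans ?_⟩
  calc ∑ k ∈ Finset.range (N + 1), |(Polynomial.C c * g i).coeff k|
      = c * ∑ k ∈ Finset.range (N + 1), |(g i).coeff k| := by
        simp only [coeff_C_mul, abs_mul, abs_of_pos hc, Finset.mul_sum]
    _ ≤ c * S := by
        gcongr
        exact Finset.single_le_sum (f := fun i => ∑ k ∈ Finset.range (N + 1), |(g i).coeff k|)
          (fun i _ => by positivity) (Finset.mem_univ i)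
    _ ≤ ε := by
        rw [div_mul_eq_mul_div, div_le_iff₀ (by positivity)]
        nlinarith

theorem hinfNorm_le {m n : Type*} [Fintype m] [Fintype n] {G : Matrix m n (RatFunc ℝ)} {c : ℝ}
    (hc : 0 ≤ c)
    (h : ∀ ω : ℝ, ∀ i j, ‖RatFunc.eval (algebraMap ℝ ℂ) (Complex.I * ω) (G i j)‖ ≤ c) :
    hinfNorm G ≤ c :=
  Real.iSup_le (fun ω => Real.iSup_le (fun i => Real.iSup_le (h ω i) hc) hc) hc

section FaultDetection

variable {p mu md mf mw : ℕ} {Gu : Matrix (Fin p) (Fin mu) (RatFunc ℝ)}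
  {Gd : Matrix (Fin p) (Fin md) (RatFunc ℝ)} {Gf : Matrix (Fin p) (Fin mf) (RatFunc ℝ)}
  {Gw : Matrix (Fin p) (Fin mw) (RatFunc ℝ)}

theorem AFDPSolvable.efdpSolvable (h : AFDPSolvable Gu Gd Gf Gw) : EFDPSolvable Gu Gd Gf :=
  let ⟨q, Q, hp, hs, hu, hd, hf, hnz, _⟩ := h 1 one_pos
  ⟨q, Q, hp, hs, hu, hd, hf, hnz⟩

theorem EFDPSolvable.rank_lt (h : EFDPSolvable Gu Gd Gf) (j : Fin mf) :
    Gd.rank < (fromCols Gd (colMat Gf j)).rank := by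
  obtain ⟨q, Q, -, -, -, hd, -, hnz⟩ := h
  have hj := hnz j
  rw [mul_fromRows_zero_s7] at hd hj
  exact (rank_lt_rank_fromCols_replicateCol_iff Gd (Gf.col j)).mpr
    (exists_vecMul_eq_zero_dotProduct_ne_zero_of_mul hd hj)

theorem afdpSolvable_of_rows (V : Matrix (Fin mf) (Fin p) (RatFunc ℝ))
    (hVd : ∀ j, V j ᵥ* Gd = 0) (hVf : ∀ j, V j ⬝ᵥ Gf.col j ≠ 0) :
    AFDPSolvable Gu Gd Gf Gw := by
  intro ε hε
  set Q₀ := fromCols V (-(V * Gu))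
  set M := fromCols Q₀ (fromCols (V * Gf) (V * Gw))
  obtain ⟨α, hα0, hα⟩ := RatFunc.exists_mul_isProperR_isStableR_norm_eval_le
    (fun x : Fin mf × _ => M x.1 x.2) (half_pos hε)
  have hQ : ∀ {k : ℕ} (X : Matrix (Fin p) (Fin k) (RatFunc ℝ))
      (Z : Matrix (Fin mu) (Fin k) (RatFunc ℝ)),
      (α • Q₀) * fromRows X Z = α • (V * X - V * Gu * Z) := by
    intro k X Z
    rw [smul_mul, fromCols_mul_fromRows, Matrix.neg_mul, sub_eq_add_neg]
  refine ⟨mf, α • Q₀, fun i j => (hα (i, .inl j)).1, fun i j => (hα (i, .inl j)).2.1, ?_, ?_,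
    ?_, fun j => ?_, ?_, ?_⟩
  · rw [hQ, Matrix.mul_one, sub_self, smul_zero]
  · rw [hQ, Matrix.mul_zero, sub_zero, show V * Gd = 0 from funext hVd, smul_zero]
  · rw [hQ, Matrix.mul_zero, sub_zero]
    exact fun i j => (hα (i, .inr (.inl j))).2.1
  · rw [hQ, Matrix.mul_zero, sub_zero]
    intro h
    exact mul_ne_zero hα0 (hVf j) (congrFun (congrFun h j) 0)
  · rw [hQ, Matrix.mul_zero, sub_zero]
    exact fun i j => (hα (i, .inr (.inr j))).2.1
  · rw [hQ, Matrix.mul_zero, sub_zero]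
    exact (hinfNorm_le (half_pos hε).le fun ω i j => (hα (i, .inr (.inr j))).2.2 ω).trans_lt
      (half_lt_self hε)

theorem afdpSolvable_of_rank_lt
    (hrk : ∀ j : Fin mf, Gd.rank < (fromCols Gd (colMat Gf j)).rank) :
    AFDPSolvable Gu Gd Gf Gw := by
  choose v hvd hvf using fun j =>
    (rank_lt_rank_fromCols_replicateCol_iff Gd (Gf.col j)).mp (hrk j)
  exact afdpSolvable_of_rows (Matrix.of v) hvd hvf

end FaultDetection

/-- **Solvability of the AFDP**: the AFDP is solvable iff the EFDP is solvable,
equivalently iff the system is completely fault detectable. -/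
theorem afdp_solvable_iff
    (p mu md mf mw : ℕ)
    (Gu : Matrix (Fin p) (Fin mu) (RatFunc ℝ))
    (Gd : Matrix (Fin p) (Fin md) (RatFunc ℝ))
    (Gf : Matrix (Fin p) (Fin mf) (RatFunc ℝ))
    (Gw : Matrix (Fin p) (Fin mw) (RatFunc ℝ)) :
    (AFDPSolvable Gu Gd Gf Gw ↔ EFDPSolvable Gu Gd Gf) ∧
      (AFDPSolvable Gu Gd Gf Gw ↔
        ∀ j : Fin mf, Gd.rank < (Matrix.fromCols Gd (colMat Gf j)).rank) :=
  ⟨⟨AFDPSolvable.efdpSolvable, fun h => afdpSolvable_of_rank_lt h.rank_lt⟩,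
    ⟨fun h => h.efdpSolvable.rank_lt, afdpSolvable_of_rank_lt⟩⟩
end
end

section
/- For a given n_b × m_f structure matrix S without zero columns, the soft approximate fault detection and isolation problem (soft AFDIP) for the system y = G_u u + G_d d + G_f f + G_w w is solvable if and only if the exact fault detection problem (EFDP) is solvable. -/
/-!
Statement 11: For a given n_b × m_f structure matrix S without zero columns, the
soft approximate fault detection and isolation problem (soft AFDIP) for the
system y = G_u u + G_d d + G_f f + G_w w is solvable if and only if the exact
fault detection problem (EFDP) is solvable.
-/

open Matrix Polynomial

noncomputable section

/-- Solvability of the soft AFDIP for the structure matrix `S`: for every `ε > 0`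
there is a bank of `n_b` proper stable filters decoupling `u` and `d` with stable
fault and noise channels, achieving `S_{R̃_f} = S` (the blocks selected by `S`
are nonzero) while the complementary fault blocks `R̄_f` and the noise channels
`R_w` have `H∞`-norm smaller than `ε`. -/
def SoftAFDIPSolvable {p mu md mf mw nb : ℕ}
    (Gu : Matrix (Fin p) (Fin mu) (RatFunc ℝ))
    (Gd : Matrix (Fin p) (Fin md) (RatFunc ℝ))
    (Gf : Matrix (Fin p) (Fin mf) (RatFunc ℝ))
    (Gw : Matrix (Fin p) (Fin mw) (RatFunc ℝ))
    (S : Fin nb → Fin mf → Bool) : Prop :=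
  ∀ ε : ℝ, 0 < ε →
    ∃ (q : Fin nb → ℕ)
      (Q : ∀ i : Fin nb, Matrix (Fin (q i)) (Fin p ⊕ Fin mu) (RatFunc ℝ)),
      ∀ i : Fin nb,
        (Q i).IsProperR ∧ (Q i).IsStableR ∧
        Q i * Matrix.fromRows Gu (1 : Matrix (Fin mu) (Fin mu) (RatFunc ℝ)) = 0 ∧
        Q i * Matrix.fromRows Gd (0 : Matrix (Fin mu) (Fin md) (RatFunc ℝ)) = 0 ∧
        (Q i * Matrix.fromRows Gf (0 : Matrix (Fin mu) (Fin mf) (RatFunc ℝ))).IsStableR ∧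
        (Q i * Matrix.fromRows Gw (0 : Matrix (Fin mu) (Fin mw) (RatFunc ℝ))).IsStableR ∧
        (∀ j : Fin mf, S i j = true →
          Q i * Matrix.fromRows (colMat Gf j)
              (0 : Matrix (Fin mu) (Fin 1) (RatFunc ℝ)) ≠ 0) ∧
        (∀ j : Fin mf, S i j = false →
          hinfNorm (Q i * Matrix.fromRows (colMat Gf j)
              (0 : Matrix (Fin mu) (Fin 1) (RatFunc ℝ))) < ε) ∧
        hinfNorm (Q i * Matrix.fromRows Gw
            (0 : Matrix (Fin mu) (Fin mw) (RatFunc ℝ))) < ε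

/-!
Stacking the filters of a soft AFDIP bank gives a single fault detection filter: each fault is
seen by some filter of the bank because `S` has no zero columns. Conversely, a fault detection
filter `Q` is turned into a soft AFDIP bank (the same filter `n_b` times) in two rescalings.
Multiplying by `D / (s + 1)^(deg D)`, where `D` is the product of the denominators of `Q G_w`,
cancels the unstable poles of the noise channel while keeping `Q` proper and stable; multiplying
by a small constant `c > 0` then pushes all `H∞`-norms below `ε`, as
`hinfNorm (c • M) = c * hinfNorm M` (also when the supremum is infinite and `hinfNorm` is the
junk value `0`).
-/

namespace RatFunc

lemma IsStableR.of_eq_div {f : RatFunc ℝ} {p q : ℝ[X]} (hq : q ≠ 0)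
    (h : f = algebraMap _ _ p / algebraMap _ _ q)
    (hroots : ∀ z : ℂ, (q.map (algebraMap ℝ ℂ)).IsRoot z → z.re < 0) : f.IsStableR := by
  intro z hz
  obtain ⟨r, hr⟩ := (denom_dvd hq).mpr ⟨p, h⟩
  apply hroots z
  rw [hr, Polynomial.map_mul, IsRoot, Polynomial.eval_mul, hz, zero_mul]

lemma IsProperR.of_eq_div {f : RatFunc ℝ} {p q : ℝ[X]} (hq : q ≠ 0)
    (h : f = algebraMap _ _ p / algebraMap _ _ q) (hdeg : p.natDegree ≤ q.natDegree) :
    f.IsProperR := by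
  rcases eq_or_ne f 0 with rfl | hf
  · simp [IsProperR]
  have hp : p ≠ 0 := by
    rintro rfl
    exact hf (by simpa using h)
  have hdeg_eq := congrArg natDegree ((num_mul_eq_mul_denom_iff hq).mpr h)
  rw [natDegree_mul (num_ne_zero hf) hq, natDegree_mul hp (denom_ne_zero f)] at hdeg_eq
  unfold IsProperR
  omega

lemma mul_eq_num_mul_div_denom_mul (f g : RatFunc ℝ) :
    f * g = algebraMap _ _ (f.num * g.num) / algebraMap _ _ (f.denom * g.denom) := by
  rw [map_mul, map_mul, ← div_mul_div_comm, num_div_denom, num_div_denom]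

lemma IsStableR.mul {f g : RatFunc ℝ} (hf : f.IsStableR) (hg : g.IsStableR) :
    (f * g).IsStableR := by
  refine .of_eq_div (mul_ne_zero (denom_ne_zero f) (denom_ne_zero g))
    (mul_eq_num_mul_div_denom_mul f g) fun z hz => ?_
  rw [Polynomial.map_mul, IsRoot, Polynomial.eval_mul, mul_eq_zero] at hz
  exact hz.elim (hf z) (hg z)

lemma IsProperR.mul {f g : RatFunc ℝ} (hf : f.IsProperR) (hg : g.IsProperR) :
    (f * g).IsProperR := by
  refine .of_eq_div (mul_ne_zero (denom_ne_zero f) (denom_ne_zero g))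
    (mul_eq_num_mul_div_denom_mul f g) ?_
  calc (f.num * g.num).natDegree ≤ f.num.natDegree + g.num.natDegree := natDegree_mul_le
    _ ≤ f.denom.natDegree + g.denom.natDegree := add_le_add hf hg
    _ = (f.denom * g.denom).natDegree := (natDegree_mul (denom_ne_zero f) (denom_ne_zero g)).symm

lemma isStableR_C (c : ℝ) : (C c).IsStableR := by
  intro z hz
  simp [denom_C] at hz

lemma isProperR_C (c : ℝ) : (C c).IsProperR := by
  simp [IsProperR, denom_C]

lemma eval_C_mul {c : ℝ} (hc : c ≠ 0) (f : RatFunc ℝ) (x : ℂ) :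
    eval (algebraMap ℝ ℂ) x (C c * f) = c * eval (algebraMap ℝ ℂ) x f := by
  by_cases hd : eval₂ (algebraMap ℝ ℂ) x f.denom = 0
  · have hdvd : f.denom ∣ (C c * f).denom := by
      have := denom_mul_dvd (C c⁻¹) (C c * f)
      rwa [← mul_assoc, ← map_mul, inv_mul_cancel₀ hc, map_one, one_mul, denom_C, one_mul] at this
    rw [eval_eq_zero_of_eval₂_denom_eq_zero hd, mul_zero,
      eval_eq_zero_of_eval₂_denom_eq_zero (eval₂_eq_zero_of_dvd_of_eval₂_eq_zero _ _ hdvd hd)]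
  · rw [eval_mul _ _ (by simp [denom_C]) hd, eval_C]
    rfl

lemma re_neg_of_isRoot_X_add_one_pow {n : ℕ} {z : ℂ}
    (hz : (((Polynomial.X + 1 : ℝ[X]) ^ n).map (algebraMap ℝ ℂ)).IsRoot z) : z.re < 0 := by
  have hz1 : z + 1 = 0 := (by simpa [IsRoot] using hz : z + 1 = 0 ∧ n ≠ 0).1
  rw [eq_neg_of_add_eq_zero_left hz1]
  norm_num

/-- The factor `D / (s + 1)^(deg D)` is proper and stable, and cancels every denominator
dividing `D`. -/
lemma exists_isStableR_mul_of_denom_dvd (D : ℝ[X]) (hD : D ≠ 0) :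
    ∃ g : RatFunc ℝ, g ≠ 0 ∧ g.IsProperR ∧ g.IsStableR ∧
      ∀ f : RatFunc ℝ, f.denom ∣ D → (g * f).IsStableR := by
  set β : ℝ[X] := (Polynomial.X + 1) ^ D.natDegree
  have hβ : β ≠ 0 := pow_ne_zero _ (monic_X_add_C 1).ne_zero
  refine ⟨algebraMap _ _ D / algebraMap _ _ β,
    div_ne_zero (algebraMap_ne_zero hD) (algebraMap_ne_zero hβ),
    .of_eq_div hβ rfl ?_, .of_eq_div hβ rfl fun z => re_neg_of_isRoot_X_add_one_pow,
    fun f ⟨E, hE⟩ => .of_eq_div (p := E * f.num) hβ ?_ fun z => re_neg_of_isRoot_X_add_one_pow⟩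
  · rw [natDegree_pow, ← C_1, natDegree_X_add_C, mul_one]
  · have hf : f * algebraMap _ _ f.denom = algebraMap _ _ f.num :=
      (eq_div_iff (algebraMap_ne_zero (denom_ne_zero f))).mp (num_div_denom f).symm
    rw [hE, map_mul, map_mul, ← hf]
    ring

end RatFunc

lemma exists_pos_forall_mul_lt {ι : Type*} [Finite ι] (a : ι → ℝ) {ε : ℝ} (hε : 0 < ε) :
    ∃ c > 0, ∀ i, c * a i < ε := by
  obtain ⟨M, hM⟩ := (Set.finite_range a).bddAbove
  obtain ⟨c, hc, hcM⟩ := exists_pos_mul_lt hε (max M 0)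
  refine ⟨c, hc, fun i => ?_⟩
  calc c * a i ≤ c * max M 0 := by gcongr; exact le_max_of_le_left (hM ⟨i, rfl⟩)
    _ < ε := by rwa [mul_comm]

namespace Matrix

variable {m n o α : Type*}

lemma IsProperR.smul {k : RatFunc ℝ} {Q : Matrix m n (RatFunc ℝ)} (hk : k.IsProperR)
    (hQ : Q.IsProperR) : (k • Q).IsProperR :=
  fun i j => hk.mul (hQ i j)

lemma IsStableR.smul {k : RatFunc ℝ} {Q : Matrix m n (RatFunc ℝ)} (hk : k.IsStableR)
    (hQ : Q.IsStableR) : (k • Q).IsStableR :=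
  fun i j => hk.mul (hQ i j)

lemma exists_isStableR_smul [Fintype m] [Fintype n] (R : Matrix m n (RatFunc ℝ)) :
    ∃ g : RatFunc ℝ, g ≠ 0 ∧ g.IsProperR ∧ g.IsStableR ∧ (g • R).IsStableR := by
  set D : ℝ[X] := ∏ i, ∏ j, (R i j).denom
  have hD : D ≠ 0 := Finset.prod_ne_zero_iff.mpr fun i _ =>
    Finset.prod_ne_zero_iff.mpr fun j _ => RatFunc.denom_ne_zero _
  obtain ⟨g, hg0, hgP, hgS, hg⟩ := RatFunc.exists_isStableR_mul_of_denom_dvd D hD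
  refine ⟨g, hg0, hgP, hgS, fun i j => hg (R i j) ?_⟩
  exact (Finset.dvd_prod_of_mem (fun j => (R i j).denom) (Finset.mem_univ j)).trans
    (Finset.dvd_prod_of_mem (fun i => ∏ j, (R i j).denom) (Finset.mem_univ i))

def stackRows {ι : Type*} [Fintype ι] {q : ι → ℕ} (Q : ∀ i, Matrix (Fin (q i)) n α) :
    Matrix (Fin (Fintype.card (Σ i, Fin (q i)))) n α :=
  of fun k => Q ((Fintype.equivFin _).symm k).1 ((Fintype.equivFin _).symm k).2

section stackRows

variable {ι : Type*} [Fintype ι] {q : ι → ℕ} (Q : ∀ i, Matrix (Fin (q i)) n α)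

lemma stackRows_mul [Fintype n] [NonUnitalNonAssocSemiring α] (M : Matrix n o α) :
    stackRows Q * M = stackRows fun i => Q i * M := by
  ext k c
  simp [stackRows, mul_apply]

lemma stackRows_eq_zero_iff [Zero α] : stackRows Q = 0 ↔ ∀ i, Q i = 0 := by
  refine ⟨fun h i => ?_, fun h => ?_⟩
  · ext r c
    have := congrFun (congrFun h (Fintype.equivFin _ ⟨i, r⟩)) c
    rwa [stackRows, of_apply, Equiv.symm_apply_apply] at this
  · ext k c
    simp [stackRows, h]

lemma IsProperR.stackRows {Q : ∀ i, Matrix (Fin (q i)) n (RatFunc ℝ)}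
    (hQ : ∀ i, (Q i).IsProperR) : (stackRows Q).IsProperR :=
  fun _ _ => hQ _ _ _

lemma IsStableR.stackRows {Q : ∀ i, Matrix (Fin (q i)) n (RatFunc ℝ)}
    (hQ : ∀ i, (Q i).IsStableR) : (stackRows Q).IsStableR :=
  fun _ _ => hQ _ _ _

end stackRows

end Matrix

lemma hinfNorm_C_smul {m n : Type*} [Fintype m] [Fintype n] {c : ℝ} (hc : 0 < c)
    (M : Matrix m n (RatFunc ℝ)) : hinfNorm (RatFunc.C c • M) = c * hinfNorm M := by
  simp_rw [hinfNorm, Matrix.smul_apply, smul_eq_mul, RatFunc.eval_C_mul hc.ne', norm_mul,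
    Complex.norm_real, Real.norm_eq_abs, abs_of_pos hc, ← Real.mul_iSup_of_nonneg hc.le]

section FaultDetectionFilter

variable {p mu md mf : ℕ} (Gu : Matrix (Fin p) (Fin mu) (RatFunc ℝ))
  (Gd : Matrix (Fin p) (Fin md) (RatFunc ℝ)) (Gf : Matrix (Fin p) (Fin mf) (RatFunc ℝ))

/-- A filter `Q` witnessing `EFDPSolvable Gu Gd Gf`. -/
def IsFaultDetectionFilter {q : ℕ} (Q : Matrix (Fin q) (Fin p ⊕ Fin mu) (RatFunc ℝ)) : Prop :=
  Q.IsProperR ∧ Q.IsStableR ∧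
    Q * fromRows Gu (1 : Matrix (Fin mu) (Fin mu) (RatFunc ℝ)) = 0 ∧
    Q * fromRows Gd (0 : Matrix (Fin mu) (Fin md) (RatFunc ℝ)) = 0 ∧
    (Q * fromRows Gf (0 : Matrix (Fin mu) (Fin mf) (RatFunc ℝ))).IsStableR ∧
    ∀ j : Fin mf, Q * fromRows (colMat Gf j) (0 : Matrix (Fin mu) (Fin 1) (RatFunc ℝ)) ≠ 0

variable {Gu Gd Gf}

lemma IsFaultDetectionFilter.smul {q : ℕ} {Q : Matrix (Fin q) (Fin p ⊕ Fin mu) (RatFunc ℝ)}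
    (hQ : IsFaultDetectionFilter Gu Gd Gf Q) {k : RatFunc ℝ} (hk0 : k ≠ 0) (hkP : k.IsProperR)
    (hkS : k.IsStableR) : IsFaultDetectionFilter Gu Gd Gf (k • Q) := by
  obtain ⟨hP, hS, hu, hd, hf, hnz⟩ := hQ
  refine ⟨hP.smul hkP, hS.smul hkS, ?_, ?_, ?_, fun j => ?_⟩ <;> rw [smul_mul]
  · rw [hu, smul_zero]
  · rw [hd, smul_zero]
  · exact hf.smul hkS
  · exact smul_ne_zero hk0 (hnz j)

lemma isFaultDetectionFilter_stackRows {ι : Type*} [Fintype ι] {q : ι → ℕ}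
    {Q : ∀ i, Matrix (Fin (q i)) (Fin p ⊕ Fin mu) (RatFunc ℝ)} (hP : ∀ i, (Q i).IsProperR)
    (hS : ∀ i, (Q i).IsStableR)
    (hu : ∀ i, Q i * fromRows Gu (1 : Matrix (Fin mu) (Fin mu) (RatFunc ℝ)) = 0)
    (hd : ∀ i, Q i * fromRows Gd (0 : Matrix (Fin mu) (Fin md) (RatFunc ℝ)) = 0)
    (hf : ∀ i, (Q i * fromRows Gf (0 : Matrix (Fin mu) (Fin mf) (RatFunc ℝ))).IsStableR)
    (hnz : ∀ j : Fin mf, ∃ i,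
      Q i * fromRows (colMat Gf j) (0 : Matrix (Fin mu) (Fin 1) (RatFunc ℝ)) ≠ 0) :
    IsFaultDetectionFilter Gu Gd Gf (stackRows Q) := by
  refine ⟨.stackRows hP, .stackRows hS, ?_, ?_, ?_, fun j => ?_⟩ <;> rw [stackRows_mul]
  · exact (stackRows_eq_zero_iff _).mpr hu
  · exact (stackRows_eq_zero_iff _).mpr hd
  · exact .stackRows hf
  · obtain ⟨i, hi⟩ := hnz j
    exact fun h => hi ((stackRows_eq_zero_iff _).mp h i)

lemma softAFDIPSolvable_of_isFaultDetectionFilter {mw nb q : ℕ}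
    (Gw : Matrix (Fin p) (Fin mw) (RatFunc ℝ)) (S : Fin nb → Fin mf → Bool)
    {Q : Matrix (Fin q) (Fin p ⊕ Fin mu) (RatFunc ℝ)} (hQ : IsFaultDetectionFilter Gu Gd Gf Q) :
    SoftAFDIPSolvable Gu Gd Gf Gw S := by
  intro ε hε
  obtain ⟨g, hg0, hgP, hgS, hgw⟩ :=
    exists_isStableR_smul (Q * fromRows Gw (0 : Matrix (Fin mu) (Fin mw) (RatFunc ℝ)))
  obtain ⟨c, hc, hcε⟩ := exists_pos_forall_mul_lt (fun o : Option (Fin mf) =>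
    o.elim (hinfNorm (g • Q * fromRows Gw (0 : Matrix (Fin mu) (Fin mw) (RatFunc ℝ))))
      fun j => hinfNorm (g • Q * fromRows (colMat Gf j) (0 : Matrix (Fin mu) (Fin 1) (RatFunc ℝ))))
    hε
  obtain ⟨hP, hS, hu, hd, hf, hnz⟩ := (hQ.smul hg0 hgP hgS).smul
    ((_root_.map_ne_zero RatFunc.C).mpr hc.ne') (RatFunc.isProperR_C c) (RatFunc.isStableR_C c)
  refine ⟨fun _ => q, fun _ => RatFunc.C c • g • Q, fun _ =>
    ⟨hP, hS, hu, hd, hf, ?_, fun j _ => hnz j, fun j _ => ?_, ?_⟩⟩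
  · rw [smul_mul, smul_mul]
    exact hgw.smul (RatFunc.isStableR_C c)
  · rw [smul_mul, hinfNorm_C_smul hc]
    exact hcε (some j)
  · rw [smul_mul, hinfNorm_C_smul hc]
    exact hcε none

end FaultDetectionFilter

/-- **Solvability of the soft AFDIP**: for a structure matrix without zero
columns, the soft AFDIP is solvable iff the EFDP is solvable. -/
theorem soft_afdip_solvable_iff_efdp
    (p mu md mf mw nb : ℕ)
    (Gu : Matrix (Fin p) (Fin mu) (RatFunc ℝ))
    (Gd : Matrix (Fin p) (Fin md) (RatFunc ℝ))
    (Gf : Matrix (Fin p) (Fin mf) (RatFunc ℝ))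
    (Gw : Matrix (Fin p) (Fin mw) (RatFunc ℝ))
    (S : Fin nb → Fin mf → Bool)
    (hS : ∀ j : Fin mf, ∃ i : Fin nb, S i j = true) :
    SoftAFDIPSolvable Gu Gd Gf Gw S ↔ EFDPSolvable Gu Gd Gf := by
  constructor
  · intro hsoft
    obtain ⟨q, Q, hQ⟩ := hsoft 1 one_pos
    exact ⟨_, stackRows Q, isFaultDetectionFilter_stackRows (fun i => (hQ i).1)
      (fun i => (hQ i).2.1) (fun i => (hQ i).2.2.1) (fun i => (hQ i).2.2.2.1)
      (fun i => (hQ i).2.2.2.2.1) fun j => (hS j).imp fun i hi => (hQ i).2.2.2.2.2.2.1 j hi⟩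
  · rintro ⟨q, Q, hQ⟩
    exact softAFDIPSolvable_of_isFaultDetectionFilter Gw S hQ

end
end

section
/- The multiple model consisting of N systems y^{(j)} = G_u^{(j)} u + G_d^{(j)} d^{(j)} (no noise) is extended model detectable if and only if for every i = 1,…,N and every j ≠ i, rank [G_d^{(i)}(λ) G_d^{(j)}(λ) G_u^{(i)}(λ) − G_u^{(j)}(λ)] > rank G_d^{(i)}(λ) (normal ranks over rational functions). -/
/-!
A filter `Q = [Q_y, Q_u]` annihilates the `i`-th internal form exactly when `Q_u = -Q_y G_u⁽ⁱ⁾`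
and `Q_y G_d⁽ⁱ⁾ = 0`; on the `j`-th model it then vanishes exactly when
`Q_y [G_d⁽ʲ⁾, G_u⁽ⁱ⁾ - G_u⁽ʲ⁾] = 0`. A left annihilator of `G_d⁽ⁱ⁾` that does not annihilate
`[G_d⁽ʲ⁾, G_u⁽ⁱ⁾ - G_u⁽ʲ⁾]` exists iff appending these columns raises the rank (rank–nullity for
left kernels), and a basis of the left kernel of `G_d⁽ⁱ⁾` serves all `j` at once. Multiplying by
the nonzero scalar `D / (s + 1)^e`, with `D` a common denominator and `e` large, makes the filter
proper and stable without changing which products vanish.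
-/

open Matrix Polynomial

noncomputable section

theorem RatFunc.isProperR_iff_intDegree_nonpos_s13 (f : RatFunc ℝ) :
    f.IsProperR ↔ f.intDegree ≤ 0 := by
  rw [IsProperR, intDegree]
  omega

theorem RatFunc.isProperR_div (a b : ℝ[X]) (h : a.natDegree ≤ b.natDegree) :
    (algebraMap ℝ[X] (RatFunc ℝ) a / algebraMap ℝ[X] (RatFunc ℝ) b).IsProperR := by
  rcases eq_or_ne a 0 with rfl | ha
  · simp [IsProperR]
  rcases eq_or_ne b 0 with rfl | hb
  · simp [IsProperR]
  rw [isProperR_iff_intDegree_nonpos_s13, intDegree_div (algebraMap_ne_zero ha)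
    (algebraMap_ne_zero hb), intDegree_polynomial, intDegree_polynomial]
  omega

theorem RatFunc.isStableR_div_s13 (a : ℝ[X]) {b : ℝ[X]} (hb : b ≠ 0)
    (h : ∀ z : ℂ, (b.map (algebraMap ℝ ℂ)).IsRoot z → z.re < 0) :
    (algebraMap ℝ[X] (RatFunc ℝ) a / algebraMap ℝ[X] (RatFunc ℝ) b).IsStableR :=
  fun z hz => h z (hz.dvd (Polynomial.map_dvd _ ((denom_dvd hb).mpr ⟨a, rfl⟩)))

theorem RatFunc.isStableR_div_X_add_C_pow (a : ℝ[X]) {r : ℝ} (hr : 0 < r) (e : ℕ) :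
    (algebraMap ℝ[X] (RatFunc ℝ) a /
      algebraMap ℝ[X] (RatFunc ℝ) ((Polynomial.X + Polynomial.C r) ^ e)).IsStableR := by
  refine isStableR_div_s13 a (pow_ne_zero _ (X_add_C_ne_zero r)) fun z hz => ?_
  have hz : (z + r) ^ e = 0 := by simpa using hz
  rw [eq_neg_of_add_eq_zero_left (pow_eq_zero_iff'.mp hz).1]
  simpa using hr

theorem RatFunc.exists_mul_isProperR_isStableR {ι : Type*} [Fintype ι] (w : ι → RatFunc ℝ) :
    ∃ c ≠ 0, ∀ l, (c * w l).IsProperR ∧ (c * w l).IsStableR := by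
  set D := ∏ l, (w l).denom
  set e := D.natDegree + Finset.univ.sup fun l => (w l).num.natDegree
  set P : ℝ[X] := (Polynomial.X + Polynomial.C 1) ^ e with hP_def
  have hD : D ≠ 0 := Finset.prod_ne_zero_iff.mpr fun l _ => (w l).denom_ne_zero
  have hP : P ≠ 0 := pow_ne_zero _ (X_add_C_ne_zero 1)
  refine ⟨algebraMap ℝ[X] (RatFunc ℝ) D / algebraMap ℝ[X] (RatFunc ℝ) P,
    div_ne_zero (algebraMap_ne_zero hD) (algebraMap_ne_zero hP), fun l => ?_⟩
  obtain ⟨r, hr⟩ : (w l).denom ∣ D := Finset.dvd_prod_of_mem _ (Finset.mem_univ l)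
  have hcw : algebraMap ℝ[X] (RatFunc ℝ) D / algebraMap ℝ[X] (RatFunc ℝ) P * w l =
      algebraMap ℝ[X] (RatFunc ℝ) ((w l).num * r) / algebraMap ℝ[X] (RatFunc ℝ) P := by
    conv_lhs => rw [← num_div_denom (w l)]
    have hdenom := algebraMap_ne_zero (w l).denom_ne_zero
    rw [hr, map_mul, map_mul]
    field_simp
  rw [hcw]
  refine ⟨isProperR_div _ _ ?_, isStableR_div_X_add_C_pow _ one_pos e⟩
  have hr_le : r.natDegree ≤ D.natDegree := natDegree_le_of_dvd (Dvd.intro_left _ hr.symm) hD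
  have hnum_le := Finset.le_sup (f := fun l => (w l).num.natDegree) (Finset.mem_univ l)
  calc ((w l).num * r).natDegree ≤ (w l).num.natDegree + r.natDegree := natDegree_mul_le
    _ ≤ P.natDegree := by
      rw [hP_def, natDegree_pow, natDegree_X_add_C]
      omega

theorem Matrix.exists_smul_isProperR_isStableR {m n : Type*} [Fintype m] [Fintype n]
    (M : Matrix m n (RatFunc ℝ)) :
    ∃ c : RatFunc ℝ, c ≠ 0 ∧ (c • M).IsProperR ∧ (c • M).IsStableR := by
  obtain ⟨c, hc, h⟩ := RatFunc.exists_mul_isProperR_isStableR fun ij : m × n => M ij.1 ij.2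
  exact ⟨c, hc, fun i j => (h (i, j)).1, fun i j => (h (i, j)).2⟩

namespace Matrix

section CommSemiring

variable {R : Type*} [CommSemiring R] {l m n n' : Type*}

theorem mul_eq_zero_iff_forall_vecMul [Fintype m] (Q : Matrix l m R) (B : Matrix m n R) :
    Q * B = 0 ↔ ∀ k, Q k ᵥ* B = 0 := by
  refine ⟨fun h k => ?_, fun h => funext fun k => ?_⟩
  · rw [← mul_apply_eq_vecMul, h]; rfl
  · rw [mul_apply_eq_vecMul, h k]; rfl

theorem ker_vecMulLinear_fromCols [Fintype m] (A : Matrix m n R) (B : Matrix m n' R) :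
    LinearMap.ker (fromCols A B).vecMulLinear =
      LinearMap.ker A.vecMulLinear ⊓ LinearMap.ker B.vecMulLinear := by
  ext v
  simp only [LinearMap.mem_ker, vecMulLinear_apply, vecMul_fromCols, Submodule.mem_inf,
    funext_iff, Sum.forall, Pi.zero_apply]
  rfl

theorem rank_fromCols_fromCols {n₁ n₂ n₃ : Type*} [Fintype n₁] [Fintype n₂] [Fintype n₃]
    (A : Matrix m n₁ R) (B : Matrix m n₂ R) (C : Matrix m n₃ R) :
    (fromCols (fromCols A B) C).rank = (fromCols A (fromCols B C)).rank := by
  rw [← rank_reindex (Equiv.refl m) (Equiv.sumAssoc n₁ n₂ n₃)]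
  congr 1
  ext i (j | j | j) <;> rfl

end CommSemiring

section Field

variable {K : Type*} [Field K] {l m n n' : Type*} [Fintype m]

def leftKernelBasis (A : Matrix m n K) :
    Matrix (Fin (Module.finrank K (LinearMap.ker A.vecMulLinear))) m K :=
  of fun k => (Module.finBasis K (LinearMap.ker A.vecMulLinear) k : m → K)

theorem leftKernelBasis_mul_self (A : Matrix m n K) : leftKernelBasis A * A = 0 :=
  (mul_eq_zero_iff_forall_vecMul _ _).mpr fun k =>
    (Module.finBasis K (LinearMap.ker A.vecMulLinear) k).2

theorem leftKernelBasis_mul_eq_zero_iff (A : Matrix m n K) (B : Matrix m n' K) :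
    leftKernelBasis A * B = 0 ↔ ∀ v : m → K, v ᵥ* A = 0 → v ᵥ* B = 0 := by
  rw [mul_eq_zero_iff_forall_vecMul]
  refine ⟨fun h v hv => ?_, fun h k =>
    h _ ((mul_eq_zero_iff_forall_vecMul _ _).mp (leftKernelBasis_mul_self A) k)⟩
  have hvanish : B.vecMulLinear ∘ₗ (LinearMap.ker A.vecMulLinear).subtype = 0 :=
    (Module.finBasis K _).ext h
  exact LinearMap.congr_fun hvanish ⟨v, hv⟩

variable [Fintype n] [Fintype n']

theorem rank_add_finrank_ker_vecMulLinear (A : Matrix m n K) :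
    A.rank + Module.finrank K (LinearMap.ker A.vecMulLinear) = Fintype.card m := by
  rw [← rank_transpose, rank, mulVecLin_transpose]
  simpa using A.vecMulLinear.finrank_range_add_finrank_ker

theorem rank_lt_rank_fromCols_iff_s13 (A : Matrix m n K) (B : Matrix m n' K) :
    A.rank < (fromCols A B).rank ↔ ∃ v : m → K, v ᵥ* A = 0 ∧ v ᵥ* B ≠ 0 := by
  have hA := rank_add_finrank_ker_vecMulLinear A
  have hAB := rank_add_finrank_ker_vecMulLinear (fromCols A B)
  rw [ker_vecMulLinear_fromCols] at hAB
  calc A.rank < (fromCols A B).rank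
      ↔ Module.finrank K ↥(LinearMap.ker A.vecMulLinear ⊓ LinearMap.ker B.vecMulLinear) <
          Module.finrank K (LinearMap.ker A.vecMulLinear) := by omega
    _ ↔ LinearMap.ker A.vecMulLinear ⊓ LinearMap.ker B.vecMulLinear <
          LinearMap.ker A.vecMulLinear := by
      refine ⟨fun h => inf_le_left.lt_of_ne fun he => ?_, Submodule.finrank_lt_finrank_of_lt⟩
      rw [he] at h
      exact h.false
    _ ↔ ∃ v : m → K, v ᵥ* A = 0 ∧ v ᵥ* B ≠ 0 := by
      simp [inf_lt_left, SetLike.not_le_iff_exists]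

theorem rank_lt_rank_fromCols_of_mul_eq_zero_of_mul_ne_zero {Q : Matrix l m K}
    {A : Matrix m n K} {B : Matrix m n' K} (hA : Q * A = 0) (hB : Q * B ≠ 0) :
    A.rank < (fromCols A B).rank := by
  obtain ⟨k, hk⟩ := not_forall.mp (mt (mul_eq_zero_iff_forall_vecMul Q B).mpr hB)
  exact (rank_lt_rank_fromCols_iff_s13 A B).mpr
    ⟨Q k, (mul_eq_zero_iff_forall_vecMul Q A).mp hA k, hk⟩

theorem rank_lt_rank_fromCols_iff_leftKernelBasis_mul_ne_zero (A : Matrix m n K)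
    (B : Matrix m n' K) : A.rank < (fromCols A B).rank ↔ leftKernelBasis A * B ≠ 0 := by
  simp [rank_lt_rank_fromCols_iff_s13, leftKernelBasis_mul_eq_zero_iff]

end Field

section Plant

variable {R : Type*} [Ring R] {l m n d d' : Type*} [Fintype m] [Fintype n] [DecidableEq n]

/-- Maps `(u, d)` to `(y, u)`. -/
def augmentedPlant (Gu : Matrix m n R) (Gd : Matrix m d R) : Matrix (m ⊕ n) (n ⊕ d) R :=
  fromRows (fromCols Gu Gd) (fromCols 1 0)

def residualFilter (Qy : Matrix l m R) (Gu : Matrix m n R) : Matrix l (m ⊕ n) R :=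
  fromCols Qy (-(Qy * Gu))

theorem fromCols_mul_augmentedPlant (Qy : Matrix l m R) (Qu : Matrix l n R)
    (Gu : Matrix m n R) (Gd : Matrix m d R) :
    fromCols Qy Qu * augmentedPlant Gu Gd = fromCols (Qy * Gu + Qu) (Qy * Gd) := by
  rw [augmentedPlant, fromRows_fromCols_eq_fromBlocks, fromCols_mul_fromBlocks, Matrix.mul_one,
    Matrix.mul_zero, add_zero]

theorem fromCols_mul_augmentedPlant_eq_zero_iff (Qy : Matrix l m R) (Qu : Matrix l n R)
    (Gu : Matrix m n R) (Gd : Matrix m d R) :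
    fromCols Qy Qu * augmentedPlant Gu Gd = 0 ↔ Qu = -(Qy * Gu) ∧ Qy * Gd = 0 := by
  rw [fromCols_mul_augmentedPlant, ← fromCols_zero, fromCols_inj.eq_iff, add_eq_zero_iff_eq_neg']

theorem residualFilter_mul_augmentedPlant_eq_zero_iff (Qy : Matrix l m R)
    (Gu Gu' : Matrix m n R) (Gd' : Matrix m d' R) :
    residualFilter Qy Gu * augmentedPlant Gu' Gd' = 0 ↔ Qy * fromCols Gd' (Gu - Gu') = 0 := by
  rw [residualFilter, fromCols_mul_augmentedPlant_eq_zero_iff, mul_fromCols, ← fromCols_zero,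
    fromCols_inj.eq_iff, Matrix.mul_sub, sub_eq_zero, neg_inj, and_comm, eq_comm]

end Plant

end Matrix

/-- **Characterization of extended model detectability**. -/
theorem extended_model_detectable_iff_rank
    (N p mu : ℕ) (md : Fin N → ℕ)
    (Gu : ∀ _ : Fin N, Matrix (Fin p) (Fin mu) (RatFunc ℝ))
    (Gd : ∀ j : Fin N, Matrix (Fin p) (Fin (md j)) (RatFunc ℝ)) :
    (∃ (q : Fin N → ℕ)
        (Q : ∀ i : Fin N, Matrix (Fin (q i)) (Fin p ⊕ Fin mu) (RatFunc ℝ)),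
        (∀ i : Fin N, (Q i).IsProperR ∧ (Q i).IsStableR) ∧
        (∀ i : Fin N,
          Q i * Matrix.fromRows (Matrix.fromCols (Gu i) (Gd i))
            (Matrix.fromCols (1 : Matrix (Fin mu) (Fin mu) (RatFunc ℝ))
              (0 : Matrix (Fin mu) (Fin (md i)) (RatFunc ℝ))) = 0) ∧
        (∀ i j : Fin N, i ≠ j →
          Q i * Matrix.fromRows (Matrix.fromCols (Gu j) (Gd j))
            (Matrix.fromCols (1 : Matrix (Fin mu) (Fin mu) (RatFunc ℝ))
              (0 : Matrix (Fin mu) (Fin (md j)) (RatFunc ℝ))) ≠ 0)) ↔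
      ∀ i j : Fin N, j ≠ i →
        (Gd i).rank <
          (Matrix.fromCols (Matrix.fromCols (Gd i) (Gd j))
            (Gu i - Gu j)).rank := by
  
  constructor
  · rintro ⟨q, Q, -, hii, hij⟩ i j hji
    have hi := hii i
    have hj := hij i j hji.symm
    rw [← fromCols_toCols (Q i)] at hi hj
    obtain ⟨hQu, hQGd⟩ := (fromCols_mul_augmentedPlant_eq_zero_iff _ _ _ _).mp hi
    rw [hQu] at hj
    rw [rank_fromCols_fromCols]
    exact rank_lt_rank_fromCols_of_mul_eq_zero_of_mul_ne_zero hQGd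
      ((residualFilter_mul_augmentedPlant_eq_zero_iff _ _ _ _).not.mp hj)
  · intro h
    choose c hc0 hc using fun i =>
      (residualFilter (leftKernelBasis (Gd i)) (Gu i)).exists_smul_isProperR_isStableR
    refine ⟨_, fun i => c i • residualFilter (leftKernelBasis (Gd i)) (Gu i), hc,
      fun i => ?_, fun i j hij => ?_⟩
    · rw [Matrix.smul_mul, smul_eq_zero]
      refine Or.inr ((residualFilter_mul_augmentedPlant_eq_zero_iff _ _ _ _).mpr ?_)
      rw [sub_self, mul_fromCols, leftKernelBasis_mul_self, Matrix.mul_zero, fromCols_zero]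
    · rw [Matrix.smul_mul]
      refine smul_ne_zero (hc0 i)
        ((residualFilter_mul_augmentedPlant_eq_zero_iff _ _ _ _).not.mpr ?_)
      rw [← Ne, ← rank_lt_rank_fromCols_iff_leftKernelBasis_mul_ne_zero, ← rank_fromCols_fromCols]
      exact h i j hij.symm

end
end
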